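/- Let L : H² → L² be a closed operator with resolvent R(L,λ) = (λ − L)^{−1} for λ in its resolvent set, and let P be a bounded projection on L² with P L v = 0 for v ∈ H² (i.e. range of L annihilated by P after projection, arising from a simple eigenvalue at 0) and R(L,λ)P = λ^{−1} P. Let Q = I − P, let ∂_ξ denote differentiation, and set B = [L, ∂_ξ] (the commutator, defined on smooth enough functions). Then for every g ∈ H¹ and λ in the resolvent set: R(L,λ) Q ∂_ξ g − ∂_ξ R(L,λ) Q g = R(L,λ) [ B R(L,λ) Q g − (P∂_ξ − ∂_ξ P) g ]. -/
import Mathlib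


/-- Resolvent commutator identity: with `R = (λ - L)⁻¹`, `P` the spectral projection
for the simple eigenvalue at `0` (so `P ∘ L = 0` and `R ∘ P = λ⁻¹ P`), `Q = I - P`,
and `B = [L, D]` the commutator with differentiation `D = ∂_ξ`, one has
`R Q D g - D R Q g = R (B R Q g - (P D - D P) g)`. -/
theorem stmt11 (X : Type*) [AddCommGroup X] [Module ℝ X]
    (L R P D Q : X →ₗ[ℝ] X) (lam : ℝ) (hlam : lam ≠ 0)
    (hQ : Q = LinearMap.id - P)
    (hR₁ : R ∘ₗ (lam • LinearMap.id - L) = LinearMap.id)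
    (hR₂ : (lam • LinearMap.id - L) ∘ₗ R = LinearMap.id)
    (hPL : P ∘ₗ L = 0)
    (hRP : R ∘ₗ P = lam⁻¹ • P) :
    ∀ g : X,
      R (Q (D g)) - D (R (Q g)) =
        R ((L ∘ₗ D - D ∘ₗ L) (R (Q g)) - (P (D g) - D (P g))) := by
  intro g
  have h1 : ∀ x, R (lam • x - L x) = x := fun x => by
    have := congrArg (fun f => f x) hR₁; simpa using this
  have h2 : lam • R (Q g) - L (R (Q g)) = Q g := by
    have := congrArg (fun f => f (Q g)) hR₂; simpa using this
  set u := R (Q g) with hu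
  have hLu : L u = lam • u - Q g := by rw [← h2]; abel
  have key : (L ∘ₗ D - D ∘ₗ L) u - (P (D g) - D (P g))
      = Q (D g) - (lam • D u - L (D u)) := by
    simp only [LinearMap.sub_apply, LinearMap.comp_apply, hLu, map_sub, map_smul, hQ,
      LinearMap.id_apply]
    abel
  rw [key, map_sub, h1 (D u)]
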